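/- arXiv:1805.05301 — 2 statements merged into one kernel-verified Lean document; each statement's English description precedes it below -/
import Mathlib

section
/- Let A be a Hopf algebra and L a unital partial A-module algebra. Define φ: L → Hom(A, L) by φ(x)(a) = a · x. Then φ is an injective algebra homomorphism, where Hom(A,L) has the convolution product (fg)(a) = f(a₁)g(a₂), and moreover φ(x)(a ▷ φ(y)) = φ(x(a·y)) for all a ∈ A, x,y ∈ L, where (a ▷ f)(c) = f(ca). -/
open TensorProduct

variable {k A L : Type*}

/-- Sweedler-style convolution: `conv f g = Σ f(a₁) * g(a₂)` as a linear map on `A`. -/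
noncomputable def conv [Field k] [Ring A] [HopfAlgebra k A] [Ring L] [Algebra k L]
    (f g : A →ₗ[k] L) : A →ₗ[k] L :=
  TensorProduct.lift ((LinearMap.mul k L).compl₁₂ f g) ∘ₗ Coalgebra.comul

theorem LinearMap.flip_injective_of_apply_eq_self {R M N : Type*} [CommSemiring R]
    [AddCommMonoid M] [AddCommMonoid N] [Module R M] [Module R N]
    (pact : M →ₗ[R] N →ₗ[R] N) (m : M) (hm : ∀ x, pact m x = x) :
    Function.Injective pact.flip := fun x y h => by
  simpa only [LinearMap.flip_apply, hm] using LinearMap.congr_fun h m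

theorem conv_flip_comp_mulRight_eq_flip_mul [Field k] [Ring A] [HopfAlgebra k A] [Ring L] [Algebra k L]
    (pact : A →ₗ[k] L →ₗ[k] L)
    (hp_comp : ∀ (a b : A), ∀ x y : L,
      pact a (x * pact b y) =
        conv (pact.flip x) ((pact.flip y) ∘ₗ LinearMap.mulRight k b) a)
    (a : A) (x y : L) :
    conv (pact.flip x) ((pact.flip y) ∘ₗ LinearMap.mulRight k a) =
      pact.flip (x * pact a y) :=
  LinearMap.ext fun c => (hp_comp c a x y).symm

theorem flip_mul_eq_conv [Field k] [Ring A] [HopfAlgebra k A] [Ring L] [Algebra k L]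
    (pact : A →ₗ[k] L →ₗ[k] L) (hp_one : ∀ x : L, pact 1 x = x)
    (hp_comp : ∀ (a b : A), ∀ x y : L,
      pact a (x * pact b y) =
        conv (pact.flip x) ((pact.flip y) ∘ₗ LinearMap.mulRight k b) a)
    (x y : L) :
    pact.flip (x * y) = conv (pact.flip x) (pact.flip y) := by
  simpa only [hp_one, LinearMap.mulRight_one, LinearMap.comp_id] using
    (conv_flip_comp_mulRight_eq_flip_mul pact hp_comp 1 x y).symm

/-- For a unital partial `A`-module algebra `L`, the map
`φ : L → Hom(A,L)`, `φ(x)(a) = a · x`, is an injective algebra homomorphism into the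
convolution algebra `Hom(A,L)`, and `φ(x)(a ▷ φ(y)) = φ(x(a·y))`, where
`(a ▷ f)(c) = f(ca)`. -/
theorem phi_monomorphism_into_Hom
    [Field k] [Ring A] [HopfAlgebra k A] [Ring L] [Algebra k L]
    -- partial action of A on L, with φ x = pact.flip x:
    (pact : A →ₗ[k] L →ₗ[k] L)
    (hp_one : ∀ x : L, pact 1 x = x)
    (hp_comp : ∀ (a b : A), ∀ x y : L,
      pact a (x * pact b y) =
        conv (pact.flip x) ((pact.flip y) ∘ₗ LinearMap.mulRight k b) a) :
    -- φ is injective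
    Function.Injective (fun x : L => pact.flip x) ∧
    -- φ is multiplicative for the convolution product
    (∀ x y : L, pact.flip (x * y) = conv (pact.flip x) (pact.flip y)) ∧
    -- φ(x)(a ▷ φ(y)) = φ(x(a·y))
    (∀ (a : A) (x y : L),
      conv (pact.flip x) ((pact.flip y) ∘ₗ LinearMap.mulRight k a) =
        pact.flip (x * pact a y)) :=
  ⟨pact.flip_injective_of_apply_eq_self 1 hp_one, flip_mul_eq_conv pact hp_one hp_comp,
    conv_flip_comp_mulRight_eq_flip_mul pact hp_comp⟩
end

section
/- Let A be a Hopf algebra, L a unital partial A-module algebra, φ: L → Hom(A,L) the map φ(x)(a) = a·x, and R = A ▷ φ(L) the k-span of elements a ▷ φ(x) inside Hom(A,L). Then R is an A-submodule algebra of Hom(A,L): it is closed under the A-action and under the convolution product, with (a ▷ φ(x))(b ▷ φ(y)) = a₁ ▷ φ(x(S(a₂)b · y)). Moreover φ(L) ⊆ R and φ(L) is a right ideal of R. -/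
open TensorProduct

variable {k A L : Type*}

/-- The bilinear map `(u, v) ↦ (a ▷-action by u) of φ(x · ((S v)b · y))`, i.e.
`B u v = φ(x (S(v)b · y)) ∘ mulRight u`, used to express
`Σ a₁ ▷ φ(x (S(a₂)b · y))` as `lift B (comul a)`. -/
noncomputable def prodB [Field k] [Ring A] [HopfAlgebra k A] [Ring L] [Algebra k L]
    (pact : A →ₗ[k] L →ₗ[k] L) (b : A) (x y : L) : A →ₗ[k] A →ₗ[k] (A →ₗ[k] L) :=
  (((LinearMap.llcomp k A (A →ₗ[k] A) (A →ₗ[k] L)).flip ((LinearMap.mul k A).flip)) ∘ₗ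
    (LinearMap.llcomp k A A L) ∘ₗ
    (pact.flip ∘ₗ LinearMap.mulLeft k x ∘ₗ pact.flip y ∘ₗ LinearMap.mulRight k b ∘ₗ
      HopfAlgebra.antipode (R := k))).flip

/-!
Put `Φ(u ⊗ v) = (u·x)(v·y)`. The partial-action axiom says `u·(x(w·y)) = Φ(Δ(u)(1 ⊗ w))`, and
evaluating at `c`, both `(a ▷ φ(x))(b ▷ φ(y))` and `Σ a₁ ▷ φ(x(S(a₂)b·y))` become
`Φ(Δ(c)(a ⊗ b))`: the first directly, the second by the Hopf identity
`Σ Δ(a₁)(1 ⊗ S(a₂)) = a ⊗ 1`. Since convolution is bilinear, this product of generators shows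
that `R` is closed under convolution, and `φ(x)(b ▷ φ(y)) = φ(x(b·y))` shows that `φ(L)` is a right
ideal.
-/

open Coalgebra HopfAlgebra LinearMap

namespace TensorProduct

theorem lift_apply_mem {R M N P : Type*} [CommSemiring R] [AddCommMonoid M] [Module R M]
    [AddCommMonoid N] [Module R N] [AddCommMonoid P] [Module R P] (B : M →ₗ[R] N →ₗ[R] P)
    {p : Submodule R P} (h : ∀ m n, B m n ∈ p) (t : M ⊗[R] N) : lift B t ∈ p := by
  induction t using TensorProduct.induction_on with
  | zero => simp
  | tmul m n => exact h m n
  | add s t hs ht => simpa using p.add_mem hs ht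

theorem lift_compl₁₂_mulRight_mulRight {R B M : Type*} [CommSemiring R] [Semiring B]
    [Algebra R B] [AddCommMonoid M] [Module R M] (Φ : B →ₗ[R] B →ₗ[R] M) (p q : B)
    (t : B ⊗[R] B) :
    lift (Φ.compl₁₂ (mulRight R p) (mulRight R q)) t = lift Φ (t * (p ⊗ₜ q)) := by
  induction t using TensorProduct.induction_on with
  | zero => simp
  | tmul u v => simp
  | add s t hs ht => simp [add_mul, hs, ht]

end TensorProduct

-- In Sweedler notation: `Σ a₁ ⊗ a₂ S(a₃) = a ⊗ 1`.
theorem mul'_comp_map_comul_antipode_comp_comul {R H : Type*} [CommSemiring R] [Semiring H]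
    [HopfAlgebra R H] :
    mul' R (H ⊗[R] H) ∘ₗ
        map comul (Algebra.TensorProduct.includeRight.toLinearMap ∘ₗ antipode R) ∘ₗ comul =
      (Algebra.TensorProduct.includeLeft : H →ₐ[R] H ⊗[R] H).toLinearMap := by
  have untwist : mul' R (H ⊗[R] H) ∘ₗ
        map comul (Algebra.TensorProduct.includeRight.toLinearMap ∘ₗ antipode R) =
      (mul' R H ∘ₗ (antipode R).lTensor H).lTensor H ∘ₗ
        (TensorProduct.assoc R H H H).toLinearMap ∘ₗ comul.rTensor H := by
    refine TensorProduct.ext' fun u v => ?_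
    suffices h : ∀ t : H ⊗[R] H, t * (1 ⊗ₜ antipode R v) =
        (mul' R H ∘ₗ (antipode R).lTensor H).lTensor H
          (TensorProduct.assoc R H H H (t ⊗ₜ v)) from h (comul u)
    intro t
    induction t using TensorProduct.induction_on with
    | zero => simp
    | tmul p q => simp
    | add s t hs ht => simp [add_mul, hs, ht, add_tmul]
  rw [← comp_assoc, untwist, comp_assoc, comp_assoc, coassoc, ← comp_assoc, ← lTensor_comp,
    comp_assoc, mul_antipode_lTensor_comul, lTensor_comp, comp_assoc, lTensor_counit_comp_comul]
  ext a
  simp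

section

variable [Field k] [Ring A] [HopfAlgebra k A] [Ring L] [Algebra k L]

theorem conv_eq_ofConv_mul (f g : A →ₗ[k] L) :
    conv f g = (WithConv.toConv f * WithConv.toConv g).ofConv := by
  have : lift ((LinearMap.mul k L).compl₁₂ f g) = mul' k L ∘ₗ map f g :=
    TensorProduct.ext' fun _ _ => rfl
  rw [conv, this]
  rfl

noncomputable def convBilin : (A →ₗ[k] L) →ₗ[k] (A →ₗ[k] L) →ₗ[k] A →ₗ[k] L :=
  mk₂ k conv
    (fun f f' g => by simp [conv_eq_ofConv_mul, add_mul])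
    (fun c f g => by simp [conv_eq_ofConv_mul])
    (fun f g g' => by simp [conv_eq_ofConv_mul, mul_add])
    (fun c f g => by simp [conv_eq_ofConv_mul])

@[simp] theorem convBilin_apply (f g : A →ₗ[k] L) : convBilin f g = conv f g := rfl

theorem conv_comp_mulRight_apply (f g : A →ₗ[k] L) (p q c : A) :
    conv (f ∘ₗ mulRight k p) (g ∘ₗ mulRight k q) c =
      lift ((LinearMap.mul k L).compl₁₂ f g) (comul c * (p ⊗ₜ q)) := by
  rw [← lift_compl₁₂_mulRight_mulRight]
  rfl

theorem prodB_apply (pact : A →ₗ[k] L →ₗ[k] L) (b : A) (x y : L) (u v : A) :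
    prodB pact b x y u v = pact.flip (x * pact (antipode k v * b) y) ∘ₗ mulRight k u := rfl

variable {pact : A →ₗ[k] L →ₗ[k] L}

theorem conv_comp_mulRight_eq_lift_prodB
    (hφ : ∀ (b : A) (x y : L),
      conv (pact.flip x) (pact.flip y ∘ₗ mulRight k b) = pact.flip (x * pact b y))
    (a b : A) (x y : L) :
    conv (pact.flip x ∘ₗ mulRight k a) (pact.flip y ∘ₗ mulRight k b) =
      lift (prodB pact b x y) (comul a) := by
  set Φ := lift ((LinearMap.mul k L).compl₁₂ (pact.flip x) (pact.flip y))
  have hpact : ∀ u w, pact u (x * pact w y) = Φ (comul u * (1 ⊗ₜ w)) := fun u w => by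
    rw [← conv_comp_mulRight_apply, mulRight_one, comp_id, hφ, flip_apply]
  have hsum : ∀ (c : A) (t : A ⊗[k] A), lift (prodB pact b x y) t c =
      Φ (comul c * mul' k (A ⊗[k] A)
        (map comul (Algebra.TensorProduct.includeRight.toLinearMap ∘ₗ antipode k) t) *
          (1 ⊗ₜ b)) := fun c t => by
    induction t using TensorProduct.induction_on with
    | zero => simp
    | tmul u v =>
      simp only [lift.tmul, prodB_apply, comp_apply, mulRight_apply, flip_apply, hpact]
      simp [Bialgebra.comul_mul, mul_assoc]
    | add s t hs ht => simp [mul_add, add_mul, hs, ht]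
  ext c
  rw [conv_comp_mulRight_apply, hsum, ← comp_apply (map _ _), ← comp_apply (mul' _ _),
    mul'_comp_map_comul_antipode_comp_comul, AlgHom.toLinearMap_apply,
    Algebra.TensorProduct.includeLeft_apply, mul_assoc, Algebra.TensorProduct.tmul_mul_tmul,
    mul_one, one_mul]

variable (pact) in
def spanPhi : Submodule k (A →ₗ[k] L) :=
  Submodule.span k {f | ∃ (a : A) (x : L), f = pact.flip x ∘ₗ mulRight k a}

theorem comp_mulRight_mem_spanPhi (a : A) (x : L) :
    pact.flip x ∘ₗ mulRight k a ∈ spanPhi pact :=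
  Submodule.subset_span ⟨a, x, rfl⟩

theorem flip_mem_spanPhi (x : L) : pact.flip x ∈ spanPhi pact := by
  simpa using comp_mulRight_mem_spanPhi (pact := pact) 1 x

theorem comp_mulRight_mem_spanPhi_of_mem {f : A →ₗ[k] L} (hf : f ∈ spanPhi pact) (a : A) :
    f ∘ₗ mulRight k a ∈ spanPhi pact := by
  have : spanPhi pact ≤ (spanPhi pact).comap (lcomp k L (mulRight k a)) := by
    refine Submodule.span_le.2 ?_
    rintro _ ⟨b, x, rfl⟩
    simpa [lcomp_apply', comp_assoc, mulRight_mul] using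
      comp_mulRight_mem_spanPhi (pact := pact) (a * b) x
  exact this hf

theorem conv_mem_spanPhi
    (hφ : ∀ (b : A) (x y : L),
      conv (pact.flip x) (pact.flip y ∘ₗ mulRight k b) = pact.flip (x * pact b y))
    {f g : A →ₗ[k] L} (hf : f ∈ spanPhi pact) (hg : g ∈ spanPhi pact) :
    conv f g ∈ spanPhi pact := by
  have hfg := Submodule.apply_mem_map₂ convBilin hf hg
  rw [spanPhi, Submodule.map₂_span_span] at hfg
  refine Submodule.span_le.2 ?_ hfg
  rintro _ ⟨_, ⟨a, x, rfl⟩, _, ⟨b, y, rfl⟩, rfl⟩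
  simp only [convBilin_apply, SetLike.mem_coe]
  rw [conv_comp_mulRight_eq_lift_prodB hφ]
  exact lift_apply_mem _ (fun u _ => comp_mulRight_mem_spanPhi u _) _

theorem conv_flip_mem_range
    (hφ : ∀ (b : A) (x y : L),
      conv (pact.flip x) (pact.flip y ∘ₗ mulRight k b) = pact.flip (x * pact b y))
    (x : L) {g : A →ₗ[k] L} (hg : g ∈ spanPhi pact) :
    conv (pact.flip x) g ∈ range pact.flip := by
  have : spanPhi pact ≤ (range pact.flip).comap (convBilin (pact.flip x)) := by
    refine Submodule.span_le.2 ?_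
    rintro _ ⟨b, y, rfl⟩
    simp [hφ]
  exact this hg

end

theorem span_phi_submodule_algebra_general
    [Field k] [Ring A] [HopfAlgebra k A] [Ring L] [Algebra k L]
    (pact : A →ₗ[k] L →ₗ[k] L)
    (hp_comp : ∀ (a b : A), ∀ x y : L,
      pact a (x * pact b y) =
        conv (pact.flip x) ((pact.flip y) ∘ₗ LinearMap.mulRight k b) a) :
    ∀ R : Submodule k (A →ₗ[k] L),
      R = Submodule.span k
            {f | ∃ (a : A) (x : L), f = (pact.flip x) ∘ₗ LinearMap.mulRight k a} →
      -- R is closed under the A-action (a ▷ f)(c) = f(ca)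
      (∀ (a : A), ∀ f ∈ R, f ∘ₗ LinearMap.mulRight k a ∈ R) ∧
      -- the product of generators: (a ▷ φ(x))(b ▷ φ(y)) = Σ a₁ ▷ φ(x(S(a₂)b · y))
      (∀ (a b : A) (x y : L),
        conv ((pact.flip x) ∘ₗ LinearMap.mulRight k a)
             ((pact.flip y) ∘ₗ LinearMap.mulRight k b) =
          TensorProduct.lift (prodB pact b x y) (Coalgebra.comul (R := k) a)) ∧
      -- R is closed under the convolution product
      (∀ f ∈ R, ∀ g ∈ R, conv f g ∈ R) ∧
      -- φ(L) ⊆ R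
      (∀ x : L, pact.flip x ∈ R) ∧
      -- φ(L) is a right ideal of R
      (∀ (x : L), ∀ g ∈ R, conv (pact.flip x) g ∈ Set.range pact.flip) := by
  rintro R rfl
  have hφ : ∀ (b : A) (x y : L),
      conv (pact.flip x) (pact.flip y ∘ₗ mulRight k b) = pact.flip (x * pact b y) :=
    fun b x y => LinearMap.ext fun a => (hp_comp a b x y).symm
  exact ⟨fun a _ hf => comp_mulRight_mem_spanPhi_of_mem hf a, conv_comp_mulRight_eq_lift_prodB hφ,
    fun _ hf _ hg => conv_mem_spanPhi hφ hf hg, flip_mem_spanPhi,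
    fun x _ hg => mem_range.1 (conv_flip_mem_range hφ x hg)⟩

/-- With `φ(x)(a) = a·x` and `R = A ▷ φ(L) ⊆ Hom(A,L)` (where
`(a ▷ f)(c) = f(ca)`), `R` is an `A`-submodule algebra of `Hom(A,L)`: closed under the
`A`-action and under convolution, with
`(a ▷ φ(x))(b ▷ φ(y)) = Σ a₁ ▷ φ(x(S(a₂)b · y))`; moreover `φ(L) ⊆ R` and `φ(L)` is a
right ideal of `R`. -/
theorem span_phi_submodule_algebra
    [Field k] [Ring A] [HopfAlgebra k A] [Ring L] [Algebra k L]
    (pact : A →ₗ[k] L →ₗ[k] L)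
    (hp_one : ∀ x : L, pact 1 x = x)
    (hp_comp : ∀ (a b : A), ∀ x y : L,
      pact a (x * pact b y) =
        conv (pact.flip x) ((pact.flip y) ∘ₗ LinearMap.mulRight k b) a) :
    ∀ R : Submodule k (A →ₗ[k] L),
      R = Submodule.span k
            {f | ∃ (a : A) (x : L), f = (pact.flip x) ∘ₗ LinearMap.mulRight k a} →
      -- R is closed under the A-action (a ▷ f)(c) = f(ca)
      (∀ (a : A), ∀ f ∈ R, f ∘ₗ LinearMap.mulRight k a ∈ R) ∧
      -- the product of generators: (a ▷ φ(x))(b ▷ φ(y)) = Σ a₁ ▷ φ(x(S(a₂)b · y))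
      (∀ (a b : A) (x y : L),
        conv ((pact.flip x) ∘ₗ LinearMap.mulRight k a)
             ((pact.flip y) ∘ₗ LinearMap.mulRight k b) =
          TensorProduct.lift (prodB pact b x y) (Coalgebra.comul (R := k) a)) ∧
      -- R is closed under the convolution product
      (∀ f ∈ R, ∀ g ∈ R, conv f g ∈ R) ∧
      -- φ(L) ⊆ R
      (∀ x : L, pact.flip x ∈ R) ∧
      -- φ(L) is a right ideal of R
      (∀ (x : L), ∀ g ∈ R, conv (pact.flip x) g ∈ Set.range pact.flip) :=
  span_phi_submodule_algebra_general pact hp_comp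
end
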